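/- Let α ≠ 1, μ_1, σ_1² ∈ ℝ, and define μ_t = ((α^t-1)/(α-1))·μ_1 and the sequence σ_t² by σ_t² = σ_1² + α·σ_{t-1}² + α·μ_{t-1}² for t ≥ 2. Then σ_t² = ((α^t-1)/(α-1))·σ_1² + (((α^{2t} - α^{t+1} + α^t - α)/(α-1) - 2(t-1)α^t)/(α-1)²)·μ_1². -/

import Mathlib

/-!
Induction on `t`: the right-hand side equals `σ₁²` at `t = 1`, and it satisfies the recursion,
which after clearing the denominator `(α - 1)³` is a polynomial identity in `α`, `α ^ t`, `t`.
-/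

/-- The claimed closed form of `σ_t²` in terms of `s = σ₁²` and `m = μ₁`. -/
noncomputable def sigmaSqClosedForm (α s m : ℝ) (t : ℕ) : ℝ :=
  ((α ^ t - 1) / (α - 1)) * s +
    (((α ^ (2 * t) - α ^ (t + 1) + α ^ t - α) / (α - 1) - 2 * ((t : ℝ) - 1) * α ^ t) /
      (α - 1) ^ 2) * m ^ 2

theorem sigmaSqClosedForm_one {α : ℝ} (hα : α ≠ 1) (s m : ℝ) :
    sigmaSqClosedForm α s m 1 = s := by
  have : α - 1 ≠ 0 := sub_ne_zero.mpr hα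
  simp [sigmaSqClosedForm, this]

theorem sigmaSqClosedForm_succ {α : ℝ} (hα : α ≠ 1) (s m : ℝ) (n : ℕ) :
    sigmaSqClosedForm α s m (n + 1) =
      s + α * sigmaSqClosedForm α s m n + α * (((α ^ n - 1) / (α - 1)) * m) ^ 2 := by
  have : α - 1 ≠ 0 := sub_ne_zero.mpr hα
  simp only [sigmaSqClosedForm]
  push_cast
  field_simp
  ring

theorem sigma_recursion_closed_form (α : ℝ) (hα : α ≠ 1) (μ1 : ℝ) (μ σsq : ℕ → ℝ)
    (hμ : ∀ t, μ t = ((α ^ t - 1) / (α - 1)) * μ1)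
    (hrec : ∀ t, 2 ≤ t → σsq t = σsq 1 + α * σsq (t - 1) + α * (μ (t - 1)) ^ 2) :
    ∀ t, 1 ≤ t →
      σsq t = ((α ^ t - 1) / (α - 1)) * σsq 1 +
        (((α ^ (2 * t) - α ^ (t + 1) + α ^ t - α) / (α - 1) - 2 * ((t : ℝ) - 1) * α ^ t) /
          (α - 1) ^ 2) * μ1 ^ 2 := by
  intro t ht
  change σsq t = sigmaSqClosedForm α (σsq 1) μ1 t
  induction t, ht using Nat.le_induction with
  | base => exact (sigmaSqClosedForm_one hα _ _).symm
  | succ n hn ih =>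
    rw [hrec (n + 1) (by omega), Nat.add_sub_cancel, ih, hμ, sigmaSqClosedForm_succ hα]
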